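/- Let n ≥ 2 and let λ^(n)_1,…,λ^(n)_n and λ^(n-1)_1,…,λ^(n-1)_{n-1} be complex numbers; set λ^(n-1)_n := Σ_{l=1}^{n} λ^(n)_l − Σ_{l=1}^{n-1} λ^(n-1)_l. Assume: (λ^(n)_l − λ^(n)_k)/(2πi) ∉ ℤ for all 1 ≤ l ≠ k ≤ n; (λ^(n-1)_l − λ^(n)_k)/(2πi) ∉ ℤ for all 1 ≤ l ≤ n, 1 ≤ k ≤ n; and (λ^(n-1)_l − λ^(n-1)_j)/(2πi) ∉ ℤ for all 1 ≤ l ≠ j ≤ n−1. Define a_{jk,j} = (λ^(n-1)_j − λ^(n)_k)/(2πi), a_{jk,l} = 1 + (λ^(n-1)_l − λ^(n)_k)/(2πi) for l ≠ j, b_{jk,l} = 1 + (λ^(n)_l − λ^(n)_k)/(2πi), a_{nk,l} = 1 + (λ^(n-1)_l − λ^(n)_k)/(2πi) for 1 ≤ l ≤ n−1, and a_{nk,n} = (λ^(n-1)_n − λ^(n)_k)/(2πi). For 1 ≤ j ≤ n−1 and 1 ≤ k ≤ n set (U_0)_{jk} = (λ^(n)_k − λ^(n-1)_j)^{-1} ·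 [∏_{l≠k}^{n} Γ(b_{jk,l}) / ∏_{l≠j}^{n-1} Γ(a_{jk,l})] · [∏_{l≠j}^{n-1} Γ(a_{jk,l} − a_{jk,j}) / ∏_{l≠k}^{n} Γ(b_{jk,l} − a_{jk,j})] · exp((πi/2)·a_{jk,j}), (U_{-1})_{jk} = the same expression with exp((πi/2)·a_{jk,j}) replaced by exp(−(3πi/2)·a_{jk,j}), and (U_0)_{nk} = [∏_{l≠k}^{n} Γ(b_{nk,l}) / ∏_{l=1}^{n-1} Γ(a_{nk,l})] · exp(−(πi/2)·a_{nk,n}). Then for all 1 ≤ j ≤ n−1 and all 1 ≤ k ≤ n, (U_{-1})_{jk} − (U_0)_{jk} = exp( (λ^(n-1)_n − λ^(n-1)_j)/4 ) · [ ∏_{l=1}^{n-1} Γ(1 + (λ^(n-1)_l − λ^(n-1)_j)/(2πi)) / ∏_{l=1}^{n} Γ(1 + (λ^(n)_l − λ^(n-1)_j)/(2πi)) ] · (U_0)_{nk}; in particular the ratio ((U_{-1})_{jk} − (U_0)_{jk})/(U_0)_{nk} is independent of k. -/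

import Mathlib

open Matrix Finset Complex

noncomputable section

/-- `2πi` as a complex number. -/
def twoPiI : ℂ := 2 * (Real.pi : ℂ) * Complex.I

/-- `a_{jk,l}` for a row index `j ≤ n−1` (value `a_{jk,j}` at `l = j`). -/
def aG (m : ℕ) (lam' : Fin (m+1) → ℂ) (lamn : Fin (m+2) → ℂ)
    (j : Fin (m+1)) (k : Fin (m+2)) (l : Fin (m+1)) : ℂ :=
  if l = j then (lam' j - lamn k) / twoPiI else 1 + (lam' l - lamn k) / twoPiI

/-- `b_{jk,l}`. -/
def bG (m : ℕ) (lamn : Fin (m+2) → ℂ) (k l : Fin (m+2)) : ℂ :=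
  1 + (lamn l - lamn k) / twoPiI

/-- `a_{nk,l}` for `1 ≤ l ≤ n−1`. -/
def aGn (m : ℕ) (lam' : Fin (m+1) → ℂ) (lamn : Fin (m+2) → ℂ)
    (k : Fin (m+2)) (l : Fin (m+1)) : ℂ :=
  1 + (lam' l - lamn k) / twoPiI

/-- The entry `(U_0)_{jk}`, `1 ≤ j ≤ n−1`. -/
def U0 (m : ℕ) (lam' : Fin (m+1) → ℂ) (lamn : Fin (m+2) → ℂ)
    (j : Fin (m+1)) (k : Fin (m+2)) : ℂ :=
  (lamn k - lam' j)⁻¹ *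
    ((∏ l ∈ Finset.univ.erase k, Complex.Gamma (bG m lamn k l)) /
      (∏ l ∈ Finset.univ.erase j, Complex.Gamma (aG m lam' lamn j k l))) *
    ((∏ l ∈ Finset.univ.erase j,
        Complex.Gamma (aG m lam' lamn j k l - aG m lam' lamn j k j)) /
      (∏ l ∈ Finset.univ.erase k,
        Complex.Gamma (bG m lamn k l - aG m lam' lamn j k j))) *
    Complex.exp (((Real.pi : ℂ) * Complex.I / 2) * aG m lam' lamn j k j)

/-- The entry `(U_{-1})_{jk}`, `1 ≤ j ≤ n−1`. -/
def Um1 (m : ℕ) (lam' : Fin (m+1) → ℂ) (lamn : Fin (m+2) → ℂ)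
    (j : Fin (m+1)) (k : Fin (m+2)) : ℂ :=
  (lamn k - lam' j)⁻¹ *
    ((∏ l ∈ Finset.univ.erase k, Complex.Gamma (bG m lamn k l)) /
      (∏ l ∈ Finset.univ.erase j, Complex.Gamma (aG m lam' lamn j k l))) *
    ((∏ l ∈ Finset.univ.erase j,
        Complex.Gamma (aG m lam' lamn j k l - aG m lam' lamn j k j)) /
      (∏ l ∈ Finset.univ.erase k,
        Complex.Gamma (bG m lamn k l - aG m lam' lamn j k j))) *
    Complex.exp (-(3 * (Real.pi : ℂ) * Complex.I / 2) * aG m lam' lamn j k j)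

/-- The entry `(U_0)_{nk}` of the last row; here `lam'n = λ^(n-1)_n`. -/
def U0n (m : ℕ) (lam' : Fin (m+1) → ℂ) (lamn : Fin (m+2) → ℂ) (lam'n : ℂ)
    (k : Fin (m+2)) : ℂ :=
  ((∏ l ∈ Finset.univ.erase k, Complex.Gamma (bG m lamn k l)) /
      (∏ l, Complex.Gamma (aGn m lam' lamn k l))) *
    Complex.exp (-((Real.pi : ℂ) * Complex.I / 2) * ((lam'n - lamn k) / twoPiI))

/-! The difference `U_{-1} − U_0` only changes the exponential factor of `(U_0)_{jk}`, and
`exp(−3πia/2) − exp(πia/2) = −2i sin(πa) · exp(−πia/2)`. Euler's reflection formula turns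
`sin(πa)` into `π / (Γ(a) Γ(1−a))` for `a = a_{jk,j}`; then `Γ(a+1) = a Γ(a)` and `Γ(1−a)`
complete the products over `l ≠ j` and `l ≠ k` in `(U_0)_{jk}` to the full products of the
right-hand side and of `(U_0)_{nk}`. -/

open scoped Real

lemma twoPiI_ne_zero : twoPiI ≠ 0 := by
  simp [twoPiI, Real.pi_ne_zero, Complex.I_ne_zero]

lemma twoPiI_div_Gamma_mul_Gamma_one_sub (x : ℂ) :
    twoPiI / (Gamma x * Gamma (1 - x)) = exp (π * I * x) - exp (-(π * I * x)) := by
  have hpi : (π : ℂ) ≠ 0 := ofReal_ne_zero.mpr Real.pi_ne_zero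
  rw [Gamma_mul_Gamma_one_sub, div_div_eq_mul_div, twoPiI, Complex.sin]
  field_simp
  ring_nf
  rw [I_sq]
  ring

lemma exp_sub_exp_eq_neg_twoPiI_div_Gamma_mul_Gamma_one_sub (x : ℂ) :
    exp (-(3 * π * I / 2) * x) - exp ((π * I / 2) * x) =
      -(twoPiI / (Gamma x * Gamma (1 - x))) * exp (-(π * I / 2) * x) := by
  rw [twoPiI_div_Gamma_mul_Gamma_one_sub, neg_sub, sub_mul, ← exp_add, ← exp_add]
  ring_nf

section Entries

variable {m : ℕ} (lam' : Fin (m+1) → ℂ) (lamn : Fin (m+2) → ℂ)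
  (j : Fin (m+1)) (k : Fin (m+2))

lemma aG_self : aG m lam' lamn j k j = (lam' j - lamn k) / twoPiI := if_pos rfl

lemma sub_eq_neg_twoPiI_mul_aG_self : lamn k - lam' j = -(twoPiI * aG m lam' lamn j k j) := by
  rw [aG_self, mul_div_cancel₀ _ twoPiI_ne_zero, neg_sub]

lemma prod_Gamma_aGn (ha : aG m lam' lamn j k j ≠ 0) :
    ∏ l, Gamma (aGn m lam' lamn k l) =
      aG m lam' lamn j k j * Gamma (aG m lam' lamn j k j) *
        ∏ l ∈ univ.erase j, Gamma (aG m lam' lamn j k l) := by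
  have hj : aGn m lam' lamn k j = aG m lam' lamn j k j + 1 := by
    rw [aGn, aG_self]
    ring
  rw [← mul_prod_erase univ _ (mem_univ j), hj, Gamma_add_one _ ha]
  congr 1
  refine prod_congr rfl fun l hl => ?_
  rw [aG, if_neg (ne_of_mem_erase hl), aGn]

lemma prod_Gamma_aG_sub_aG_self :
    ∏ l ∈ univ.erase j, Gamma (aG m lam' lamn j k l - aG m lam' lamn j k j) =
      ∏ l, Gamma (1 + (lam' l - lam' j) / twoPiI) := by
  rw [← prod_erase univ (f := fun l => Gamma (1 + (lam' l - lam' j) / twoPiI)) (a := j) (by simp)]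
  refine prod_congr rfl fun l hl => ?_
  rw [aG, if_neg (ne_of_mem_erase hl), aG_self]
  congr 1
  ring

lemma Gamma_one_sub_aG_self_mul_prod_Gamma_bG_sub_aG_self :
    Gamma (1 - aG m lam' lamn j k j) *
        ∏ l ∈ univ.erase k, Gamma (bG m lamn k l - aG m lam' lamn j k j) =
      ∏ l, Gamma (1 + (lamn l - lam' j) / twoPiI) := by
  rw [← mul_prod_erase univ _ (mem_univ k), aG_self]
  congr 1
  · congr 1
    ring
  · refine prod_congr rfl fun l _ => congrArg Gamma ?_
    rw [bG]
    ring

lemma exp_div_four_mul_exp (S : ℂ) :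
    exp ((S - lam' j) / 4) * exp (-(π * I / 2) * ((S - lamn k) / twoPiI)) =
      exp (-(π * I / 2) * aG m lam' lamn j k j) := by
  have hpi : (π : ℂ) ≠ 0 := ofReal_ne_zero.mpr Real.pi_ne_zero
  rw [← exp_add, aG_self, twoPiI]
  congr 1
  field_simp
  ring

end Entries

theorem stmt12_general (m : ℕ) (lamn : Fin (m+2) → ℂ) (lam' : Fin (m+1) → ℂ)
    (h2 : ∀ (l k : Fin (m+2)) (N : ℤ),
      ((Fin.snoc lam' ((∑ l, lamn l) - ∑ l, lam' l) : Fin (m+2) → ℂ) l - lamn k) /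
          twoPiI ≠ (N : ℂ)) :
    ∀ (j : Fin (m+1)) (k : Fin (m+2)),
      Um1 m lam' lamn j k - U0 m lam' lamn j k =
        Complex.exp (((∑ l, lamn l) - (∑ l, lam' l) - lam' j) / 4) *
          ((∏ l, Complex.Gamma (1 + (lam' l - lam' j) / twoPiI)) /
            (∏ l, Complex.Gamma (1 + (lamn l - lam' j) / twoPiI))) *
          U0n m lam' lamn ((∑ l, lamn l) - ∑ l, lam' l) k := by
  intro j k
  have ha : aG m lam' lamn j k j ≠ 0 := by
    simpa [aG_self] using h2 j.castSucc k 0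
  have hdiff := exp_sub_exp_eq_neg_twoPiI_div_Gamma_mul_Gamma_one_sub (aG m lam' lamn j k j)
  rw [← exp_div_four_mul_exp lam' lamn j k (∑ l, lamn l - ∑ l, lam' l)] at hdiff
  rw [Um1, U0, U0n, ← prod_Gamma_aG_sub_aG_self lam' lamn j k,
    ← Gamma_one_sub_aG_self_mul_prod_Gamma_bG_sub_aG_self lam' lamn j k,
    prod_Gamma_aGn lam' lamn j k ha, sub_eq_neg_twoPiI_mul_aG_self lam' lamn j k, ← mul_sub,
    hdiff]
  field_simp [twoPiI_ne_zero]

/-- the Gamma-function identity expressing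
`(U_{-1})_{jk} − (U_0)_{jk}` as a `k`-independent multiple of `(U_0)_{nk}`. -/
theorem stmt12 (m : ℕ) (lamn : Fin (m+2) → ℂ) (lam' : Fin (m+1) → ℂ)
    (h1 : ∀ (l k : Fin (m+2)), l ≠ k → ∀ N : ℤ, (lamn l - lamn k) / twoPiI ≠ (N : ℂ))
    (h2 : ∀ (l k : Fin (m+2)) (N : ℤ),
      ((Fin.snoc lam' ((∑ l, lamn l) - ∑ l, lam' l) : Fin (m+2) → ℂ) l - lamn k) /
          twoPiI ≠ (N : ℂ))
    (h3 : ∀ (l j : Fin (m+1)), l ≠ j → ∀ N : ℤ, (lam' l - lam' j) / twoPiI ≠ (N : ℂ)) :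
    ∀ (j : Fin (m+1)) (k : Fin (m+2)),
      Um1 m lam' lamn j k - U0 m lam' lamn j k =
        Complex.exp (((∑ l, lamn l) - (∑ l, lam' l) - lam' j) / 4) *
          ((∏ l, Complex.Gamma (1 + (lam' l - lam' j) / twoPiI)) /
            (∏ l, Complex.Gamma (1 + (lamn l - lam' j) / twoPiI))) *
          U0n m lam' lamn ((∑ l, lamn l) - ∑ l, lam' l) k :=
  stmt12_general m lamn lam' h2
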